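/- Let T be a densely defined operator on H₁ ⊕ H₂ of block form T(x,y) = (B y, C x) with mutually adjoint entries B and C as above. If T² is essentially self-adjoint on D(C) ⊕ D(B) (where T²(x,y) = (BC x, CB y)), then the operator BC is essentially self-adjoint on D(C) ∩ C⁻¹(D(B)). -/

import Mathlib

open scoped LinearPMap ComplexInnerProductSpace

/-- An unbounded operator is essentially self-adjoint if its closure is self-adjoint. -/
def EssentiallySelfAdjoint {E : Type*} [NormedAddCommGroup E] [InnerProductSpace ℂ E]
    [CompleteSpace E] (A : E →ₗ.[ℂ] E) : Prop :=
  A.closure.adjoint = A.closure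

/-!
`T²` acts as `BC ⊕ CB` on `H₁ ⊕ H₂`, so the inclusion `J : H₁ → H₁ ⊕ H₂` and its adjoint, the
projection `P = J*`, carry the graph of `BC` into that of `T²` and back. Both maps are continuous,
so the same holds for the closures, and since `P J = 1` the defining identity
`⟪y, u⟫ = ⟪x, v⟫` of the adjoint graph can be moved between the two sides through `J` and `P`:
self-adjointness of the closure of `T²` descends to the closure of `BC`.
-/

namespace Submodule

section Closure

variable {R M N : Type*} [Semiring R] [AddCommMonoid M] [Module R M] [TopologicalSpace M]
  [ContinuousAdd M] [ContinuousConstSMul R M] [AddCommMonoid N] [Module R N] [TopologicalSpace N]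
  [ContinuousAdd N] [ContinuousConstSMul R N]

theorem map_topologicalClosure_le_of_map_le {s : Submodule R M} {t : Submodule R N}
    (φ : M →L[R] N) (h : s.map φ.toLinearMap ≤ t) :
    s.topologicalClosure.map φ.toLinearMap ≤ t.topologicalClosure := by
  rintro _ ⟨p, hp, rfl⟩
  exact map_mem_closure φ.continuous hp fun q hq => h ⟨q, hq, rfl⟩

end Closure

variable {𝕜 E F : Type*} [RCLike 𝕜] [NormedAddCommGroup E] [InnerProductSpace 𝕜 E]
  [NormedAddCommGroup F] [InnerProductSpace 𝕜 F]

theorem adjoint_eq_self_of_retract {G : Submodule 𝕜 (E × E)} {H : Submodule 𝕜 (F × F)}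
    (hH : H.adjoint = H) (J : E →ₗ[𝕜] F) (P : F →ₗ[𝕜] E) (hPJ : ∀ x, P (J x) = x)
    (hJP : ∀ x w, inner 𝕜 (J x) w = inner 𝕜 x (P w))
    (hJ : G.map (J.prodMap J) ≤ H) (hP : H.map (P.prodMap P) ≤ G) : G.adjoint = G := by
  have hJJ : ∀ x y, inner 𝕜 (J x) (J y) = inner 𝕜 x y := fun x y => by rw [hJP, hPJ]
  have hPJ' : ∀ w x, inner 𝕜 w (J x) = inner 𝕜 (P w) x := fun w x => by
    rw [← inner_conj_symm, hJP, inner_conj_symm]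
  apply le_antisymm
  · rintro ⟨u, v⟩ huv
    have hJuv : (J u, J v) ∈ H := by
      rw [← hH, mem_adjoint_iff]
      intro a b hab
      rw [mem_adjoint_iff] at huv
      simpa only [hPJ'] using huv (P a) (P b) (hP ⟨(a, b), hab, rfl⟩)
    simpa only [LinearMap.prodMap_apply, hPJ] using hP ⟨_, hJuv, rfl⟩
  · rintro ⟨u, v⟩ huv
    rw [mem_adjoint_iff]
    intro a b hab
    have := (mem_adjoint_iff H _).mp (hH.symm ▸ hJ ⟨_, huv, rfl⟩) (J a) (J b) (hJ ⟨_, hab, rfl⟩)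
    simpa only [LinearMap.prodMap_apply, hJJ] using this

end Submodule

namespace LinearPMap

section Graph

variable {R E F E' F' : Type*} [CommRing R] [AddCommGroup E] [Module R E] [AddCommGroup F]
  [Module R F] [AddCommGroup E'] [Module R E'] [AddCommGroup F'] [Module R F']

theorem graph_map_le_of_forall {f : E →ₗ.[R] F} {g : E' →ₗ.[R] F'} {φ : E × F →ₗ[R] E' × F'}
    (h : ∀ x : f.domain, φ (x, f x) ∈ g.graph) : f.graph.map φ ≤ g.graph := by
  rintro _ ⟨_, hp, rfl⟩
  obtain ⟨x, rfl⟩ := f.mem_graph_iff'.mp hp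
  exact h x

variable [TopologicalSpace R] [TopologicalSpace E] [ContinuousAdd E] [ContinuousSMul R E]
  [TopologicalSpace F] [ContinuousAdd F] [ContinuousSMul R F]
  [TopologicalSpace E'] [ContinuousAdd E'] [ContinuousSMul R E']
  [TopologicalSpace F'] [ContinuousAdd F'] [ContinuousSMul R F']

theorem IsClosable.closure_graph_map_le {f : E →ₗ.[R] F} {g : E' →ₗ.[R] F'} (hf : f.IsClosable)
    (hg : g.IsClosable) {φ : E × F →L[R] E' × F'} (h : f.graph.map φ.toLinearMap ≤ g.graph) :
    f.closure.graph.map φ.toLinearMap ≤ g.closure.graph := by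
  rw [← hf.graph_closure_eq_closure_graph, ← hg.graph_closure_eq_closure_graph]
  exact Submodule.map_topologicalClosure_le_of_map_le φ h

theorem IsClosable.of_graph_map_le {f : E →ₗ.[R] F} {g : E' →ₗ.[R] F'} (hg : g.IsClosable)
    {J : E →L[R] E'} {K : F →L[R] F'} (hK : Function.Injective K)
    (h : f.graph.map (J.prodMap K).toLinearMap ≤ g.graph) :
    f.IsClosable := by
  refine ⟨f.graph.topologicalClosure.toLinearPMap,
    (Submodule.toLinearPMap_graph_eq _ fun p hp hp₁ => ?_).symm⟩
  have hφp : (J p.1, K p.2) ∈ g.closure.graph := by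
    rw [← hg.graph_closure_eq_closure_graph]
    exact Submodule.map_topologicalClosure_le_of_map_le _ h ⟨p, hp, rfl⟩
  exact hK <| by simpa [hp₁] using g.closure.graph_fst_eq_zero_snd hφp (by simp [hp₁])

end Graph

variable {𝕜 E F : Type*} [RCLike 𝕜] [NormedAddCommGroup E] [InnerProductSpace 𝕜 E]
  [CompleteSpace E] [NormedAddCommGroup F] [InnerProductSpace 𝕜 F] [CompleteSpace F]

theorem isSelfAdjoint_of_retract {A : E →ₗ.[𝕜] E} {T : F →ₗ.[𝕜] F} (hT : IsSelfAdjoint T)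
    (J : E →L[𝕜] F) (P : F →L[𝕜] E) (hPJ : ∀ x, P (J x) = x)
    (hJP : ∀ x w, inner 𝕜 (J x) w = inner 𝕜 x (P w))
    (hJ : A.graph.map (J.prodMap J).toLinearMap ≤ T.graph)
    (hP : T.graph.map (P.prodMap P).toLinearMap ≤ A.graph) :
    IsSelfAdjoint A := by
  have hA : Dense (A.domain : Set E) := by
    refine ((Function.LeftInverse.surjective hPJ).denseRange.dense_image P.continuous
      hT.dense_domain).mono ?_
    rintro _ ⟨z, hz, rfl⟩
    exact mem_domain_of_mem_graph (hP ⟨_, T.mem_graph ⟨z, hz⟩, rfl⟩)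
  have hTgraph : T.graph.adjoint = T.graph := by
    rw [← adjoint_graph_eq_graph_adjoint hT.dense_domain, isSelfAdjoint_def.mp hT]
  rw [isSelfAdjoint_def]
  apply eq_of_eq_graph
  rw [adjoint_graph_eq_graph_adjoint hA]
  exact Submodule.adjoint_eq_self_of_retract hTgraph J P hPJ hJP hJ hP

end LinearPMap

section EssentiallySelfAdjoint

variable {E F : Type*} [NormedAddCommGroup E] [InnerProductSpace ℂ E] [CompleteSpace E]
  [NormedAddCommGroup F] [InnerProductSpace ℂ F] [CompleteSpace F]

-- `LinearPMap.closure` of a non-closable operator is the operator itself, which then cannot be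
-- self-adjoint, as self-adjoint operators are closed.
theorem EssentiallySelfAdjoint.isClosable {T : E →ₗ.[ℂ] E} (hT : EssentiallySelfAdjoint T) :
    T.IsClosable := by
  by_contra h
  have hclosed := (show IsSelfAdjoint T.closure from hT).isClosed
  rw [LinearPMap.closure_def' h] at hclosed
  exact h hclosed.isClosable

theorem EssentiallySelfAdjoint.of_retract {A : E →ₗ.[ℂ] E} {T : F →ₗ.[ℂ] F}
    (hT : EssentiallySelfAdjoint T) (J : E →L[ℂ] F) (P : F →L[ℂ] E) (hPJ : ∀ x, P (J x) = x)
    (hJP : ∀ x w, ⟪J x, w⟫ = ⟪x, P w⟫) (hJ : A.graph.map (J.prodMap J).toLinearMap ≤ T.graph)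
    (hP : T.graph.map (P.prodMap P).toLinearMap ≤ A.graph) :
    EssentiallySelfAdjoint A := by
  have hTc := hT.isClosable
  have hAc := hTc.of_graph_map_le (Function.LeftInverse.injective hPJ) hJ
  exact LinearPMap.isSelfAdjoint_of_retract hT J P hPJ hJP
    (hAc.closure_graph_map_le hTc hJ) (hTc.closure_graph_map_le hAc hP)

end EssentiallySelfAdjoint

theorem block_square_essentiallySelfAdjoint_implies_BC_general
    {H₁ H₂ : Type*} [NormedAddCommGroup H₁] [InnerProductSpace ℂ H₁] [CompleteSpace H₁]
    [NormedAddCommGroup H₂] [InnerProductSpace ℂ H₂] [CompleteSpace H₂]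
    (D₁ : Submodule ℂ H₁) (D₂ : Submodule ℂ H₂)
    (C : D₁ →ₗ[ℂ] H₂) (B : D₂ →ₗ[ℂ] H₁)
    (hCB : ∀ x : D₁, C x ∈ D₂) (hBC : ∀ y : D₂, B y ∈ D₁)
    -- `T²` as a partially defined operator on the Hilbert direct sum `H₁ ⊕ H₂`:
    (T : WithLp 2 (H₁ × H₂) →ₗ.[ℂ] WithLp 2 (H₁ × H₂))
    (hTdom : ∀ z : WithLp 2 (H₁ × H₂), z ∈ T.domain ↔
      (WithLp.equiv 2 (H₁ × H₂) z).1 ∈ D₁ ∧ (WithLp.equiv 2 (H₁ × H₂) z).2 ∈ D₂)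
    (hT : ∀ (z : T.domain) (h₁ : (WithLp.equiv 2 (H₁ × H₂) (z : WithLp 2 (H₁ × H₂))).1 ∈ D₁)
        (h₂ : (WithLp.equiv 2 (H₁ × H₂) (z : WithLp 2 (H₁ × H₂))).2 ∈ D₂),
        WithLp.equiv 2 (H₁ × H₂) (T z) =
          (B ⟨C ⟨(WithLp.equiv 2 (H₁ × H₂) (z : WithLp 2 (H₁ × H₂))).1, h₁⟩,
              hCB ⟨(WithLp.equiv 2 (H₁ × H₂) (z : WithLp 2 (H₁ × H₂))).1, h₁⟩⟩,
           C ⟨B ⟨(WithLp.equiv 2 (H₁ × H₂) (z : WithLp 2 (H₁ × H₂))).2, h₂⟩,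
              hBC ⟨(WithLp.equiv 2 (H₁ × H₂) (z : WithLp 2 (H₁ × H₂))).2, h₂⟩⟩))
    (hTsa : EssentiallySelfAdjoint T)
    -- the operator `BC` defined on `D(C) ∩ C⁻¹(D(B))`:
    (S : H₁ →ₗ.[ℂ] H₁)
    (hSdom : ∀ x : H₁, x ∈ S.domain ↔ ∃ hx : x ∈ D₁, C ⟨x, hx⟩ ∈ D₂)
    (hS : ∀ (x : S.domain) (hx : (x : H₁) ∈ D₁) (hCx : C ⟨(x : H₁), hx⟩ ∈ D₂),
        S x = B ⟨C ⟨(x : H₁), hx⟩, hCx⟩) :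
    EssentiallySelfAdjoint S := by
  let e := WithLp.prodContinuousLinearEquiv 2 ℂ H₁ H₂
  let J : H₁ →L[ℂ] WithLp 2 (H₁ × H₂) := e.symm.toContinuousLinearMap ∘L .inl ℂ H₁ H₂
  let P : WithLp 2 (H₁ × H₂) →L[ℂ] H₁ := .fst ℂ H₁ H₂ ∘L e.toContinuousLinearMap
  have hJP (x : H₁) (w : WithLp 2 (H₁ × H₂)) : ⟪J x, w⟫ = ⟪x, P w⟫ := by
    simp [J, P, e, WithLp.prod_inner_apply]
  refine hTsa.of_retract J P (fun _ => rfl) hJP ?_ ?_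
  · refine LinearPMap.graph_map_le_of_forall fun x => ?_
    obtain ⟨hx, hCx⟩ := (hSdom x).1 x.2
    have hz : J x ∈ T.domain := (hTdom _).2 ⟨hx, D₂.zero_mem⟩
    refine T.mem_graph_iff.2 ⟨⟨J x, hz⟩, rfl, (WithLp.equiv 2 (H₁ × H₂)).injective ?_⟩
    rw [hT ⟨J x, hz⟩ hx D₂.zero_mem, hS x hx hCx]
    refine Prod.ext rfl ?_
    have hB0 : (⟨B ⟨0, D₂.zero_mem⟩, hBC _⟩ : D₁) = 0 := Subtype.ext (map_zero B)
    exact (congrArg C hB0).trans (map_zero C)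
  · refine LinearPMap.graph_map_le_of_forall fun z => ?_
    obtain ⟨h₁, h₂⟩ := (hTdom z).1 z.2
    have hPz : P z ∈ S.domain := (hSdom _).2 ⟨h₁, hCB _⟩
    refine S.mem_graph_iff.2 ⟨⟨P z, hPz⟩, rfl, ?_⟩
    rw [hS _ h₁ (hCB _)]
    exact congrArg Prod.fst (hT z h₁ h₂).symm

/-- if the square `T²(x,y) = (BC x, CB y)` of the block operator
`T(x,y) = (B y, C x)` is essentially self-adjoint on `D(C) ⊕ D(B)` (inside the Hilbert
direct sum `H₁ ⊕ H₂`), then `BC` is essentially self-adjoint on `D(C) ∩ C⁻¹(D(B))`. -/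
theorem block_square_essentiallySelfAdjoint_implies_BC
    {H₁ H₂ : Type*} [NormedAddCommGroup H₁] [InnerProductSpace ℂ H₁] [CompleteSpace H₁]
    [NormedAddCommGroup H₂] [InnerProductSpace ℂ H₂] [CompleteSpace H₂]
    (D₁ : Submodule ℂ H₁) (D₂ : Submodule ℂ H₂)
    (hD₁ : Dense (D₁ : Set H₁)) (hD₂ : Dense (D₂ : Set H₂))
    (C : D₁ →ₗ[ℂ] H₂) (B : D₂ →ₗ[ℂ] H₁)
    (hadj : ∀ (x : D₁) (y : D₂), ⟪C x, (y : H₂)⟫ = ⟪(x : H₁), B y⟫)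
    (hCB : ∀ x : D₁, C x ∈ D₂) (hBC : ∀ y : D₂, B y ∈ D₁)
    -- `T²` as a partially defined operator on the Hilbert direct sum `H₁ ⊕ H₂`:
    (T : WithLp 2 (H₁ × H₂) →ₗ.[ℂ] WithLp 2 (H₁ × H₂))
    (hTdom : ∀ z : WithLp 2 (H₁ × H₂), z ∈ T.domain ↔
      (WithLp.equiv 2 (H₁ × H₂) z).1 ∈ D₁ ∧ (WithLp.equiv 2 (H₁ × H₂) z).2 ∈ D₂)
    (hT : ∀ (z : T.domain) (h₁ : (WithLp.equiv 2 (H₁ × H₂) (z : WithLp 2 (H₁ × H₂))).1 ∈ D₁)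
        (h₂ : (WithLp.equiv 2 (H₁ × H₂) (z : WithLp 2 (H₁ × H₂))).2 ∈ D₂),
        WithLp.equiv 2 (H₁ × H₂) (T z) =
          (B ⟨C ⟨(WithLp.equiv 2 (H₁ × H₂) (z : WithLp 2 (H₁ × H₂))).1, h₁⟩,
              hCB ⟨(WithLp.equiv 2 (H₁ × H₂) (z : WithLp 2 (H₁ × H₂))).1, h₁⟩⟩,
           C ⟨B ⟨(WithLp.equiv 2 (H₁ × H₂) (z : WithLp 2 (H₁ × H₂))).2, h₂⟩,
              hBC ⟨(WithLp.equiv 2 (H₁ × H₂) (z : WithLp 2 (H₁ × H₂))).2, h₂⟩⟩))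
    (hTsa : EssentiallySelfAdjoint T)
    -- the operator `BC` defined on `D(C) ∩ C⁻¹(D(B))`:
    (S : H₁ →ₗ.[ℂ] H₁)
    (hSdom : ∀ x : H₁, x ∈ S.domain ↔ ∃ hx : x ∈ D₁, C ⟨x, hx⟩ ∈ D₂)
    (hS : ∀ (x : S.domain) (hx : (x : H₁) ∈ D₁) (hCx : C ⟨(x : H₁), hx⟩ ∈ D₂),
        S x = B ⟨C ⟨(x : H₁), hx⟩, hCx⟩) :
    EssentiallySelfAdjoint S :=
  block_square_essentiallySelfAdjoint_implies_BC_general D₁ D₂ C B hCB hBC T hTdom hT hTsa S hSdom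
    hS
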